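/- Let U^E_N be a differentiable family of unitary L×L matrices (E real) of the form U^E_N = φ_-^E (φ_+^E)^{-1} with φ_±^E = (1, ±i·1)Φ^E_N for a Lagrangian plane Φ^E_N. Then (1/i)(U^E_N)* ∂_E U^E_N = 2 ((φ_+^E)^{-1})* [Φ^E_N* J ∂_E Φ^E_N] (φ_+^E)^{-1}; in particular, if Φ^E_N* J ∂_E Φ^E_N is positive definite, then (1/i)(U^E_N)* ∂_E U^E_N is positive definite, so all eigenphases of U^E_N are strictly increasing in E. -/

import Mathlib

/-!
Write `Φ = (a; b)` and `φ± = a ± i b`. The Lagrangian condition `Φ* J Φ = bᴴ a - aᴴ b = 0`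
makes the cross terms in `φ±* φ±` cancel, so `φ₋* φ₋ = φ₊* φ₊ = Φ* Φ`; the rank condition makes
`Φ* Φ` positive definite, hence `φ₊` invertible and `U = φ₋ φ₊⁻¹` unitary. Differentiating the
quotient gives `U* ∂U = (φ₊⁻¹)* (φ₋* ∂φ₋ - φ₊* ∂φ₊) φ₊⁻¹`, and expanding the middle factor gives
`2i Φ* J ∂Φ`. Positivity then survives the congruence by the invertible `φ₊⁻¹`.
-/

open Matrix
open scoped ComplexOrder

noncomputable section

def Jmat (L : ℕ) : Matrix (Fin L ⊕ Fin L) (Fin L ⊕ Fin L) ℂ :=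
  Matrix.fromBlocks 0 (-1) 1 0

theorem Matrix.mulVec_injective_of_rank_eq_card {K m n : Type*} [Field K] [Fintype m]
    [Fintype n] {A : Matrix m n K} (hA : A.rank = Fintype.card n) :
    Function.Injective A.mulVec := by
  have h := LinearMap.finrank_range_add_finrank_ker A.mulVecLin
  rw [← Matrix.rank, hA, Module.finrank_fintype_fun_eq_card, add_eq_left,
    Submodule.finrank_eq_zero] at h
  exact LinearMap.ker_eq_bot.mp h

/-- The right factor is the derivative of `U = q p⁻¹` when `dq`, `dp` are those of `q`, `p`. -/
theorem Matrix.conjTranspose_mul_inv_mul_sub_eq {n R : Type*} [Fintype n] [DecidableEq n]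
    [CommRing R] [StarRing R] {p q : Matrix n n R} (hp : IsUnit p) (hqp : qᴴ * q = pᴴ * p)
    (dq dp : Matrix n n R) :
    (q * p⁻¹)ᴴ * (dq * p⁻¹ - q * p⁻¹ * dp * p⁻¹) = (p⁻¹)ᴴ * (qᴴ * dq - pᴴ * dp) * p⁻¹ := by
  have hpp : p * p⁻¹ = 1 := mul_nonsing_inv p ((isUnit_iff_isUnit_det p).mp hp)
  calc (q * p⁻¹)ᴴ * (dq * p⁻¹ - q * p⁻¹ * dp * p⁻¹)
      = (p⁻¹)ᴴ * (qᴴ * dq) * p⁻¹ - (p⁻¹)ᴴ * (qᴴ * q) * p⁻¹ * dp * p⁻¹ := by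
        simp only [conjTranspose_mul, Matrix.mul_sub, Matrix.mul_assoc]
    _ = (p⁻¹)ᴴ * (qᴴ * dq - pᴴ * dp) * p⁻¹ := by
        simp only [hqp, Matrix.mul_sub, Matrix.sub_mul, Matrix.mul_assoc, hpp,
          Matrix.one_mul]

theorem conjTranspose_fromRows_mul_Jmat_mul_fromRows {L : ℕ} {n k : Type*}
    (a b : Matrix (Fin L) n ℂ) (c d : Matrix (Fin L) k ℂ) :
    (fromRows a b)ᴴ * Jmat L * fromRows c d = bᴴ * c - aᴴ * d := by
  rw [Jmat, conjTranspose_fromRows_eq_fromCols_conjTranspose, fromCols_mul_fromBlocks,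
    fromCols_mul_fromRows]
  simp [sub_eq_add_neg, add_comm]

section ComplexStructure

variable {m n k : Type*} [Fintype m]

theorem conjTranspose_sub_I_smul_mul_sub_conjTranspose_add_I_smul_mul
    (a b : Matrix m n ℂ) (c d : Matrix m k ℂ) :
    (a - Complex.I • b)ᴴ * (c - Complex.I • d) - (a + Complex.I • b)ᴴ * (c + Complex.I • d)
      = (2 * Complex.I) • (bᴴ * c - aᴴ * d) := by
  simp only [conjTranspose_sub, conjTranspose_add, conjTranspose_smul, Complex.star_def,
    Complex.conj_I, Matrix.sub_mul, Matrix.add_mul, Matrix.mul_sub, Matrix.mul_add,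
    Matrix.smul_mul, Matrix.mul_smul]
  module

theorem conjTranspose_add_I_smul_mul_self (a b : Matrix m n ℂ) :
    (a + Complex.I • b)ᴴ * (a + Complex.I • b)
      = (fromRows a b)ᴴ * fromRows a b + Complex.I • (aᴴ * b - bᴴ * a) := by
  rw [conjTranspose_fromRows_eq_fromCols_conjTranspose, fromCols_mul_fromRows]
  simp only [conjTranspose_add, conjTranspose_smul, Complex.star_def, Complex.conj_I,
    Matrix.add_mul, Matrix.mul_add, Matrix.smul_mul, Matrix.mul_smul]
  linear_combination (norm := module) -(Complex.I_mul_I • (bᴴ * b : Matrix n n ℂ))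


theorem conjTranspose_sub_I_smul_mul_self_of_lagrangian {a b : Matrix m n ℂ}
    (hab : bᴴ * a = aᴴ * b) :
    (a - Complex.I • b)ᴴ * (a - Complex.I • b) = (a + Complex.I • b)ᴴ * (a + Complex.I • b) := by
  have h := conjTranspose_sub_I_smul_mul_sub_conjTranspose_add_I_smul_mul a b a b
  rwa [hab, sub_self, smul_zero, sub_eq_zero] at h

theorem conjTranspose_add_I_smul_mul_self_of_lagrangian {a b : Matrix m n ℂ}
    (hab : bᴴ * a = aᴴ * b) :
    (a + Complex.I • b)ᴴ * (a + Complex.I • b) = (fromRows a b)ᴴ * fromRows a b := by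
  rw [conjTranspose_add_I_smul_mul_self, ← hab, sub_self, smul_zero, add_zero]

end ComplexStructure

theorem isUnit_add_I_smul_of_lagrangian {n : Type*} [Fintype n] [DecidableEq n]
    {a b : Matrix n n ℂ} (hab : bᴴ * a = aᴴ * b)
    (hinj : Function.Injective (fromRows a b).mulVec) :
    IsUnit (a + Complex.I • b) := by
  have hG : IsUnit ((a + Complex.I • b)ᴴ * (a + Complex.I • b)) := by
    rw [conjTranspose_add_I_smul_mul_self_of_lagrangian hab]
    exact (PosDef.conjTranspose_mul_self _ hinj).isUnit
  rw [isUnit_iff_isUnit_det, det_mul] at hG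
  exact (isUnit_iff_isUnit_det _).mpr (IsUnit.mul_iff.mp hG).2

/-- With `φ± = a ± i b` for a Lagrangian frame `Φ = (a; b)` with derivative `∂Φ = (da; db)`
and `U = φ₋ φ₊⁻¹`, one has `(1/i) U* ∂U = 2 (φ₊⁻¹)* [Φ* J ∂Φ] φ₊⁻¹`; in particular if
`Φ* J ∂Φ` is positive definite then so is `(1/i) U* ∂U`. -/
theorem stmt17 (L : ℕ) (a b da db : Matrix (Fin L) (Fin L) ℂ)
    (hr : (Matrix.fromRows a b).rank = L)
    (hLag : (Matrix.fromRows a b)ᴴ * Jmat L * Matrix.fromRows a b = 0) :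
    (Complex.I)⁻¹ •
        (((a - Complex.I • b) * (a + Complex.I • b)⁻¹)ᴴ *
          ((da - Complex.I • db) * (a + Complex.I • b)⁻¹
            - (a - Complex.I • b) * (a + Complex.I • b)⁻¹
              * (da + Complex.I • db) * (a + Complex.I • b)⁻¹))
      = (2 : ℂ) • (((a + Complex.I • b)⁻¹)ᴴ *
          ((Matrix.fromRows a b)ᴴ * Jmat L * Matrix.fromRows da db) *
          (a + Complex.I • b)⁻¹)
    ∧ (((Matrix.fromRows a b)ᴴ * Jmat L * Matrix.fromRows da db).PosDef →
        ((Complex.I)⁻¹ •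
          (((a - Complex.I • b) * (a + Complex.I • b)⁻¹)ᴴ *
            ((da - Complex.I • db) * (a + Complex.I • b)⁻¹
              - (a - Complex.I • b) * (a + Complex.I • b)⁻¹
                * (da + Complex.I • db) * (a + Complex.I • b)⁻¹))).PosDef) := by
  have hab : bᴴ * a = aᴴ * b := by
    rwa [conjTranspose_fromRows_mul_Jmat_mul_fromRows, sub_eq_zero] at hLag
  have hp : IsUnit (a + Complex.I • b) :=
    isUnit_add_I_smul_of_lagrangian hab
      (mulVec_injective_of_rank_eq_card (by rwa [Fintype.card_fin]))
  have hformula := conjTranspose_mul_inv_mul_sub_eq hp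
    (conjTranspose_sub_I_smul_mul_self_of_lagrangian hab)
    (da - Complex.I • db) (da + Complex.I • db)
  rw [conjTranspose_sub_I_smul_mul_sub_conjTranspose_add_I_smul_mul,
    ← conjTranspose_fromRows_mul_Jmat_mul_fromRows, Matrix.mul_smul, Matrix.smul_mul] at hformula
  rw [hformula, smul_smul, mul_left_comm, inv_mul_cancel₀ Complex.I_ne_zero, mul_one]
  have hinv : Function.Injective (a + Complex.I • b)⁻¹.mulVec :=
    mulVec_injective_of_isUnit (isUnit_nonsing_inv_iff.mpr hp)
  exact ⟨rfl, fun hM => (hM.conjTranspose_mul_mul_same hinv).smul two_pos⟩
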